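/- Let L be a levellised n-lattice with dep(n−1) = k, and A_n,…,A_{n+m−1} ⊆ L \ {0} satisfying the conditions so that L̃ = L_{A_n,…,A_{n+m−1}} is a levellised (n+m)-lattice. Then L̃ is graded if and only if L is graded and ⋃_{i=n}^{n+m−1} A_i = lev_k(L). -/

import Mathlib

/-!
Chains from the top of `L̃` down to an old element other than `0` never pass through a new
atom, since the new atoms lie above `0` only; so these elements keep their depth. Levellisation
bounds the depth of every nonzero element of `L` by `k = dep (n - 1)`, and an element of
`A i ∩ lev_k L` then gives the new atoms depth exactly `k + 1`, and `0` depth `k + 1` in `L` and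
`k + 2` in `L̃`. The covers of `L̃` are the covers `a ⋖ b` of `L` with `a ≠ 0`, the covers of the
new atoms over `0`, the covers `aᵢ ⋖ b` of the `i`-th new atom with `b ∈ A i`, and `0 ⋖ b`
for the atoms `b` of `L` above no `A i`. Grading at `aᵢ ⋖ b` forces `A i ⊆ lev_k L`; a cover
`0 ⋖ b` of the last kind is never graded, as `dep b ≤ k`; and every element of `lev_k L` is an
atom of `L`, hence lies in some `A i` once `L̃` is graded.
-/

namespace PaperLattice

variable {N : ℕ}

/-- Depth: one less than the maximum length of a chain from `t` down to `a` w.r.t. `le`. -/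
noncomputable def dep (le : Fin N → Fin N → Prop) (t a : Fin N) : ℕ :=
  sSup {k | ∃ l : List (Fin N), List.Chain' (fun x y => le y x ∧ y ≠ x) l ∧
    l.head? = some t ∧ l.getLast? = some a ∧ l.length = k + 1}

/-- The `d`-th level: elements of depth `d`. -/
noncomputable def lev (le : Fin N → Fin N → Prop) (t : Fin N) (d : ℕ) : Set (Fin N) :=
  {a | dep le t a = d}

/-- A labelled poset is levellised if depth is monotone in the nonzero labels. -/
def Levellised (le : Fin N → Fin N → Prop) (t : Fin N) : Prop :=
  ∀ i j : Fin N, 0 < (i : ℕ) → (i : ℕ) ≤ (j : ℕ) → dep le t i ≤ dep le t j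

def lt' (le : Fin N → Fin N → Prop) (a b : Fin N) : Prop := le a b ∧ a ≠ b

/-- `b` covers `a`. -/
def CovByRel (le : Fin N → Fin N → Prop) (a b : Fin N) : Prop :=
  lt' le a b ∧ ∀ x, lt' le a x → lt' le x b → False

/-- The covering set of `a`. -/
def cov (le : Fin N → Fin N → Prop) (a : Fin N) : Set (Fin N) := {b | CovByRel le a b}

/-- The up-set of `A`. -/
def upset (le : Fin N → Fin N → Prop) (A : Set (Fin N)) : Set (Fin N) :=
  {x | ∃ a ∈ A, le a x}

def AntichainRel (le : Fin N → Fin N → Prop) (A : Set (Fin N)) : Prop :=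
  ∀ a ∈ A, ∀ b ∈ A, a ≠ b → ¬ le a b

/-- Binary weight of a set of labels. -/
noncomputable def wt (A : Set (Fin N)) : ℕ :=
  ∑ j : Fin N, A.indicator (fun j => 2 ^ (j : ℕ)) j

/-- `z` is a bottom and `o` a top for `le`. -/
def Bounds (le : Fin N → Fin N → Prop) (z o : Fin N) : Prop :=
  (∀ a, le z a) ∧ (∀ a, le a o)

/-- The order obtained from `le` by adding `m` new atoms, the `i`-th having covering set `A i`. -/
def extLe {n m : ℕ} (le : Fin n → Fin n → Prop) (A : Fin m → Set (Fin n)) :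
    Fin (n + m) → Fin (n + m) → Prop := fun x y =>
  if hx : (x : ℕ) < n then
    if hy : (y : ℕ) < n then le ⟨x, hx⟩ ⟨y, hy⟩
    else (x : ℕ) = 0
  else
    if hy : (y : ℕ) < n then
      (⟨y, hy⟩ : Fin n) ∈ upset le (A ⟨(x : ℕ) - n, by have := x.isLt; omega⟩)
    else x = y

/-- The relabelled order `π(L)`. -/
def permLe {n : ℕ} (π : Equiv.Perm (Fin n)) (le : Fin n → Fin n → Prop) :
    Fin n → Fin n → Prop := fun a b => le (π.symm a) (π.symm b)


/-- `A` is a lattice-antichain for `L` (with bottom `z`). -/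
def IsLatticeAntichain {n : ℕ} (L : Lattice (Fin n)) (z : Fin n) (A : Set (Fin n)) : Prop :=
  A.Nonempty ∧ (∀ a ∈ A, a ≠ z) ∧ AntichainRel L.le A ∧
    ∀ a ∈ upset L.le A, ∀ b ∈ upset L.le A,
      L.inf a b = z ∨ L.inf a b ∈ upset L.le A

def chainLengths (r : Fin N → Fin N → Prop) (t a : Fin N) : Set ℕ :=
  {k | ∃ l : List (Fin N), l.IsChain (fun x y => r y x ∧ y ≠ x) ∧
    l.head? = some t ∧ l.getLast? = some a ∧ l.length = k + 1}

def IsGraded (r : Fin N → Fin N → Prop) (t : Fin N) : Prop :=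
  ∀ a b, CovByRel r a b → dep r t a = dep r t b + 1

section Depth

variable {r : Fin N → Fin N → Prop} {t a b : Fin N} {j d : ℕ}

theorem eq_of_zero_mem_chainLengths (h : 0 ∈ chainLengths r t a) : a = t := by
  obtain ⟨l, -, hh, hl, hlen⟩ := h
  obtain ⟨x, rfl⟩ := List.length_eq_one_iff.mp hlen
  simp_all

theorem chainLengths_nonempty (hat : r a t) : (chainLengths r t a).Nonempty := by
  by_cases h : a = t
  · exact ⟨0, [t], by simp, rfl, by simp [h], rfl⟩
  · exact ⟨1, [t, a], by simp [hat, h], rfl, rfl, rfl⟩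

theorem succ_mem_chainLengths (hj : j ∈ chainLengths r t b) (hab : r a b) (hne : a ≠ b) :
    j + 1 ∈ chainLengths r t a := by
  obtain ⟨l, hc, hh, hl, hlen⟩ := hj
  have hl₀ : l ≠ [] := by rintro rfl; simp at hlen
  refine ⟨l ++ [a], hc.append (List.isChain_singleton a) ?_, ?_, by simp, by simp [hlen]⟩
  · simp_all
  · rw [List.head?_append_of_ne_nil _ hl₀, hh]

theorem exists_of_succ_mem_chainLengths (hj : j + 1 ∈ chainLengths r t a) :
    ∃ b, r a b ∧ a ≠ b ∧ j ∈ chainLengths r t b := by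
  obtain ⟨l, hc, hh, hl, hlen⟩ := hj
  obtain ⟨l₀, rfl⟩ : ∃ l₀, l = l₀ ++ [a] :=
    ⟨l.dropLast, (List.dropLast_append_getLast? a hl).symm⟩
  have hl₀ : l₀ ≠ [] := by rintro rfl; simp at hlen
  obtain ⟨b, hb⟩ := Option.ne_none_iff_exists'.mp (mt List.getLast?_eq_none_iff.mp hl₀)
  obtain ⟨hc₀, -, hba⟩ := List.isChain_append.mp hc
  obtain ⟨hab, hne⟩ := hba b hb a rfl
  exact ⟨b, hab, hne, l₀, hc₀, by rwa [List.head?_append_of_ne_nil _ hl₀] at hh, hb,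
    by simpa using hlen⟩

variable [IsPartialOrder (Fin N) r]

theorem nodup_of_isChain {l : List (Fin N)} (hc : l.IsChain (fun x y => r y x ∧ y ≠ x)) :
    l.Nodup := by
  have : IsTrans (Fin N) (fun x y => r y x ∧ y ≠ x) :=
    ⟨fun x y z ⟨hyx, hne⟩ ⟨hzy, _⟩ =>
      ⟨trans_of r hzy hyx, fun h => hne (antisymm hyx (h ▸ hzy))⟩⟩
  exact (List.isChain_iff_pairwise.mp hc).imp fun h => h.2.symm

theorem bddAbove_chainLengths : BddAbove (chainLengths r t a) :=
  ⟨N, fun j ⟨l, hc, _, _, hlen⟩ => by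
    have := (nodup_of_isChain hc).length_le_card
    simp only [Fintype.card_fin] at this
    omega⟩

theorem le_dep_of_mem_chainLengths (hj : j ∈ chainLengths r t a) : j ≤ dep r t a :=
  le_csSup bddAbove_chainLengths hj

theorem dep_mem_chainLengths (hat : r a t) : dep r t a ∈ chainLengths r t a :=
  Nat.sSup_mem (chainLengths_nonempty hat) bddAbove_chainLengths

theorem dep_add_one_le_of_lt (hab : r a b) (hne : a ≠ b) (hbt : r b t) :
    dep r t b + 1 ≤ dep r t a :=
  le_dep_of_mem_chainLengths (succ_mem_chainLengths (dep_mem_chainLengths hbt) hab hne)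

theorem dep_le_of_forall_lt (hat : a ≠ t) (h : ∀ b, r a b → a ≠ b → dep r t b + 1 ≤ d) :
    dep r t a ≤ d := by
  refine csSup_le' fun j hj => ?_
  cases j with
  | zero => exact absurd (eq_of_zero_mem_chainLengths hj) hat
  | succ j =>
    obtain ⟨b, hab, hne, hj⟩ := exists_of_succ_mem_chainLengths hj
    exact (Nat.add_le_add_right (le_dep_of_mem_chainLengths hj) 1).trans (h b hab hne)

end Depth

section Comap

variable {N' : ℕ} {r : Fin N → Fin N → Prop} {r' : Fin N' → Fin N' → Prop} [IsTrans (Fin N') r']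
  {f : Fin N → Fin N'} (hf : f.Injective) (hr : ∀ x y, r' (f x) (f y) ↔ r x y) {t a : Fin N}
  (hup : ∀ y, r' (f a) y → y ∈ Set.range f)
include hf hr hup

theorem chainLengths_map_eq : chainLengths r' (f t) (f a) = chainLengths r t a := by
  ext j
  constructor
  · rintro ⟨l', hc, hh, hl, hlen⟩
    have hmem : ∀ y ∈ l', y ∈ Set.range f := by
      obtain ⟨l₀, rfl⟩ : ∃ l₀, l' = l₀ ++ [f a] :=
        ⟨_, (List.dropLast_append_getLast? _ hl).symm⟩
      -- every member of a chain lies above its last element, hence in the range of `f`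
      have hpw := List.isChain_iff_pairwise.mp (hc.imp fun _ _ h => h.1 :
        (l₀ ++ [f a]).IsChain (fun x y => r' y x))
      intro y hy
      rcases List.mem_append.mp hy with hy | hy
      · exact hup y (List.pairwise_append.mp hpw |>.2.2 y hy (f a) (List.mem_singleton_self _))
      · exact ⟨a, (List.mem_singleton.mp hy).symm⟩
    obtain ⟨l, rfl⟩ : l' ∈ Set.range (List.map f) := by rwa [Set.range_list_map]
    refine ⟨l, ?_, Option.map_injective hf (by simpa using hh),
      Option.map_injective hf (by simpa using hl), by simpa using hlen⟩
    exact (List.isChain_map f).mp hc |>.imp fun x y h =>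
      ⟨(hr y x).mp h.1, fun e => h.2 (e ▸ rfl)⟩
  · rintro ⟨l, hc, hh, hl, hlen⟩
    refine ⟨l.map f, ?_, by simp [hh], by simp [hl], by simpa using hlen⟩
    exact (List.isChain_map f).mpr (hc.imp fun x y h => ⟨(hr y x).mpr h.1, hf.ne h.2⟩)

theorem dep_map_eq : dep r' (f t) (f a) = dep r t a :=
  congrArg sSup (chainLengths_map_eq hf hr hup)

end Comap

section Bounded

variable {r : Fin N → Fin N → Prop} {z o a b : Fin N}

theorem Bounds.mem_of_covByRel_bot (hb : Bounds r z o) {A : Set (Fin N)} (hA : z ∉ A)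
    (hzb : CovByRel r z b) (hbA : b ∈ upset r A) : b ∈ A := by
  obtain ⟨a, ha, hab⟩ := hbA
  by_cases h : a = b
  · exact h ▸ ha
  · exact (hzb.2 a ⟨hb.1 a, fun e => hA (e ▸ ha)⟩ ⟨hab, h⟩).elim

variable [IsPartialOrder (Fin N) r]

theorem Bounds.eq_bot_of_le (hb : Bounds r z o) (ha : r a z) : a = z :=
  antisymm ha (hb.1 a)

theorem Bounds.bot_ne_top (hb : Bounds r z o) (ha : a ≠ z) : z ≠ o := by
  rintro rfl
  exact ha (hb.eq_bot_of_le (hb.2 a))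

theorem Bounds.ne_bot_of_mem_upset (hb : Bounds r z o) {A : Set (Fin N)} (hA : z ∉ A)
    (ha : a ∈ upset r A) : a ≠ z := by
  rintro rfl
  obtain ⟨x, hx, hxz⟩ := ha
  exact hA (hb.eq_bot_of_le hxz ▸ hx)

variable {k : ℕ} (hb : Bounds r z o) (hk : ∀ a, a ≠ z → dep r o a ≤ k)
include hb hk

theorem dep_bot_eq (ha : a ≠ z) (hak : dep r o a = k) : dep r o z = k + 1 := by
  refine le_antisymm (dep_le_of_forall_lt (hb.bot_ne_top ha) fun b _ hzb => ?_) ?_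
  · exact Nat.add_le_add_right (hk b (Ne.symm hzb)) 1
  · exact hak ▸ dep_add_one_le_of_lt (hb.1 a) (Ne.symm ha) (hb.2 a)

theorem covByRel_bot_of_dep_eq (hbz : b ≠ z) (hbk : dep r o b = k) : CovByRel r z b := by
  refine ⟨⟨hb.1 b, Ne.symm hbz⟩, fun c ⟨_, hzc⟩ ⟨hcb, hcb'⟩ => ?_⟩
  have := dep_add_one_le_of_lt hcb hcb' (hb.2 b)
  have := hk c (Ne.symm hzc)
  omega

end Bounded

theorem Levellised.dep_le {r : Fin N → Fin N → Prop} {t : Fin N} (h : Levellised r t)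
    (a : Fin N) (ha : (a : ℕ) ≠ 0) : dep r t a ≤ dep r t ⟨N - 1, by omega⟩ :=
  h a _ (Nat.pos_of_ne_zero ha) (by simp only; omega)

@[simp] theorem _root_.Fin.castAdd_ne_natAdd {n m : ℕ} (x : Fin n) (i : Fin m) :
    Fin.castAdd m x ≠ Fin.natAdd n i := by
  rw [Ne, Fin.ext_iff, Fin.val_castAdd, Fin.val_natAdd]
  omega

@[simp] theorem _root_.Fin.natAdd_ne_castAdd {n m : ℕ} (x : Fin n) (i : Fin m) :
    Fin.natAdd n i ≠ Fin.castAdd m x :=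
  (Fin.castAdd_ne_natAdd x i).symm

theorem upset_of_le {r : Fin N → Fin N → Prop} [IsTrans (Fin N) r] {A : Set (Fin N)}
    {x y : Fin N} (hx : x ∈ upset r A) (hxy : r x y) : y ∈ upset r A :=
  let ⟨a, ha, hax⟩ := hx; ⟨a, ha, trans_of r hax hxy⟩

theorem mem_iff_forall_mem_upset {r : Fin N → Fin N → Prop} [IsPartialOrder (Fin N) r]
    {A : Set (Fin N)} (hA : AntichainRel r A) {b : Fin N} :
    b ∈ A ↔ b ∈ upset r A ∧ ∀ y ∈ upset r A, r y b → y = b := by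
  refine ⟨fun hb => ⟨⟨b, hb, refl_of r b⟩, fun y ⟨a, ha, hay⟩ hyb => ?_⟩,
    fun ⟨⟨a, ha, hab⟩, hmin⟩ => hmin a ⟨a, ha, refl_of r a⟩ hab ▸ ha⟩
  obtain rfl : a = b := by_contra fun hne => hA a ha b hb hne (trans_of r hay hyb)
  exact antisymm hyb hay

section Extension

open Fin

-- In `extLe r A`, `castAdd m x` is the old element `x` and `natAdd n i` the new atom whose
-- covering set is `A i`.

variable {n m : ℕ} {r : Fin n → Fin n → Prop} {A : Fin m → Set (Fin n)}

@[simp] theorem extLe_castAdd_castAdd (x y : Fin n) :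
    extLe r A (castAdd m x) (castAdd m y) ↔ r x y := by
  simp [extLe]

@[simp] theorem extLe_natAdd_castAdd (i : Fin m) (y : Fin n) :
    extLe r A (natAdd n i) (castAdd m y) ↔ y ∈ upset r (A i) := by
  simp [extLe]

@[simp] theorem extLe_natAdd_natAdd (i j : Fin m) :
    extLe r A (natAdd n i) (natAdd n j) ↔ i = j := by
  simp [extLe]

variable {z : Fin n} (hz : (z : ℕ) = 0)
include hz

theorem extLe_castAdd_natAdd (x : Fin n) (i : Fin m) :
    extLe r A (castAdd m x) (natAdd n i) ↔ x = z := by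
  simp [extLe, Fin.ext_iff, hz]

theorem covByRel_extLe_castAdd_iff {a : Fin n} (ha : a ≠ z) (b : Fin n) :
    CovByRel (extLe r A) (castAdd m a) (castAdd m b) ↔ CovByRel r a b := by
  simp [CovByRel, lt', Fin.forall_fin_add, extLe_castAdd_natAdd hz, ha]

theorem covByRel_extLe_bot_castAdd_iff (b : Fin n) :
    CovByRel (extLe r A) (castAdd m z) (castAdd m b) ↔
      CovByRel r z b ∧ ∀ i, b ∉ upset r (A i) := by
  simp [CovByRel, lt', Fin.forall_fin_add, extLe_castAdd_natAdd hz, and_assoc]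

omit hz in
theorem covByRel_extLe_natAdd_castAdd_iff [IsPartialOrder (Fin n) r]
    (hA : ∀ i, AntichainRel r (A i)) (i : Fin m) (b : Fin n) :
    CovByRel (extLe r A) (natAdd n i) (castAdd m b) ↔ b ∈ A i := by
  simp [CovByRel, lt', Fin.forall_fin_add, mem_iff_forall_mem_upset (hA i)]

variable [IsPartialOrder (Fin n) r] {o : Fin n} (hb : Bounds r z o) (hA : ∀ i, z ∉ A i)
include hb hA

theorem isPartialOrder_extLe : IsPartialOrder (Fin (n + m)) (extLe r A) := by
  have hzA : ∀ i, z ∉ upset r (A i) := fun i h => hb.ne_bot_of_mem_upset (hA i) h rfl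
  refine { refl := ?_, trans := ?_, antisymm := ?_ }
  · intro x
    induction x using Fin.addCases <;> simp [refl_of r]
  · intro x y w
    induction x using Fin.addCases <;> induction y using Fin.addCases <;>
      induction w using Fin.addCases <;>
      simp only [extLe_castAdd_castAdd, extLe_castAdd_natAdd hz, extLe_natAdd_castAdd,
        extLe_natAdd_natAdd] <;> intro h₁ h₂ <;> subst_vars
    all_goals first
      | rfl | assumption | exact hb.1 _ | exact (hzA _ h₁).elim
      | exact trans_of r h₁ h₂ | exact hb.eq_bot_of_le h₁ | exact upset_of_le h₁ h₂
  · intro x y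
    induction x using Fin.addCases <;> induction y using Fin.addCases <;>
      simp only [extLe_castAdd_castAdd, extLe_castAdd_natAdd hz, extLe_natAdd_castAdd,
        extLe_natAdd_natAdd] <;> intro h₁ h₂ <;> subst_vars
    all_goals first
      | rfl | exact (hzA _ ‹_›).elim | exact congrArg _ (antisymm h₁ h₂)

theorem dep_extLe_castAdd {a : Fin n} (ha : a ≠ z) :
    dep (extLe r A) (castAdd m o) (castAdd m a) = dep r o a :=
  haveI := isPartialOrder_extLe hz hb hA
  dep_map_eq (castAdd_injective _ _) extLe_castAdd_castAdd fun y hy => by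
    induction y using Fin.addCases with
    | left y => exact ⟨y, rfl⟩
    | right i => exact absurd ((extLe_castAdd_natAdd hz (r := r) (A := A) a i).mp hy) ha

variable {k : ℕ} (hk : ∀ a, a ≠ z → dep r o a ≤ k)
  (hAk : ∀ i, (A i ∩ lev r o k).Nonempty)
include hk hAk

theorem dep_extLe_natAdd (i : Fin m) : dep (extLe r A) (castAdd m o) (natAdd n i) = k + 1 := by
  have := isPartialOrder_extLe hz hb hA
  obtain ⟨w, hwA, hwk⟩ := hAk i
  have hwz : w ≠ z := fun h => hA i (h ▸ hwA)
  refine le_antisymm (dep_le_of_forall_lt (castAdd_ne_natAdd o i).symm fun y hy hne => ?_) ?_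
  · induction y using Fin.addCases with
    | left y =>
      have hyz := hb.ne_bot_of_mem_upset (hA i) ((extLe_natAdd_castAdd i y).mp hy)
      rw [dep_extLe_castAdd hz hb hA hyz]
      exact Nat.add_le_add_right (hk y hyz) 1
    | right j => exact absurd (congrArg _ ((extLe_natAdd_natAdd i j).mp hy)) hne
  · calc k + 1 = dep (extLe r A) (castAdd m o) (castAdd m w) + 1 := by
          rw [dep_extLe_castAdd hz hb hA hwz, hwk.symm]
      _ ≤ _ := dep_add_one_le_of_lt ((extLe_natAdd_castAdd i w).mpr ⟨w, hwA, refl_of r w⟩)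
          (castAdd_ne_natAdd w i).symm ((extLe_castAdd_castAdd w o).mpr (hb.2 w))

theorem dep_extLe_bot (i : Fin m) : dep (extLe r A) (castAdd m o) (castAdd m z) = k + 2 := by
  have := isPartialOrder_extLe hz hb hA
  obtain ⟨w, hwA, -⟩ := hAk i
  have hzo : castAdd m z ≠ castAdd m o :=
    (castAdd_injective _ _).ne (hb.bot_ne_top fun h => hA i (h ▸ hwA))
  refine le_antisymm (dep_le_of_forall_lt hzo fun y _ hne => ?_) ?_
  · induction y using Fin.addCases with
    | left y =>
      have hyz : y ≠ z := fun h => hne (congrArg _ h.symm)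
      rw [dep_extLe_castAdd hz hb hA hyz]
      have := hk y hyz
      omega
    | right j => rw [dep_extLe_natAdd hz hb hA hk hAk]
  · have := dep_add_one_le_of_lt ((extLe_castAdd_natAdd hz z i).mpr rfl)
      (castAdd_ne_natAdd z i) ((extLe_natAdd_castAdd (r := r) i o).mpr ⟨w, hwA, hb.2 w⟩)
    rw [dep_extLe_natAdd hz hb hA hk hAk] at this
    exact this

theorem exists_mem_of_covByRel_bot [NeZero m] (hgr : IsGraded (extLe r A) (castAdd m o))
    {b : Fin n} (hzb : CovByRel r z b) : ∃ i, b ∈ A i := by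
  by_contra! h
  have hbz : b ≠ z := hzb.1.2.symm
  have hnup : ∀ i, b ∉ upset r (A i) := fun i hup => h i (hb.mem_of_covByRel_bot (hA i) hzb hup)
  have := hgr _ _ ((covByRel_extLe_bot_castAdd_iff hz b).mpr ⟨hzb, hnup⟩)
  rw [dep_extLe_bot hz hb hA hk hAk 0, dep_extLe_castAdd hz hb hA hbz] at this
  have := hk b hbz
  omega

variable (hAanti : ∀ i, AntichainRel r (A i))
include hAanti

theorem subset_lev_of_isGraded_extLe (hgr : IsGraded (extLe r A) (castAdd m o)) (i : Fin m) :
    A i ⊆ lev r o k := fun b hbA => by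
  have hbz : b ≠ z := fun h => hA i (h ▸ hbA)
  have := hgr _ _ ((covByRel_extLe_natAdd_castAdd_iff hAanti i b).mpr hbA)
  rw [dep_extLe_natAdd hz hb hA hk hAk, dep_extLe_castAdd hz hb hA hbz] at this
  exact (Nat.add_right_cancel this).symm

theorem isGraded_of_isGraded_extLe [NeZero m] (hgr : IsGraded (extLe r A) (castAdd m o)) :
    IsGraded r o ∧ ⋃ i, A i = lev r o k := by
  obtain ⟨w, hwA, hwk⟩ := hAk 0
  have hzk := dep_bot_eq hb hk (fun h => hA 0 (h ▸ hwA)) hwk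
  have hsub := subset_lev_of_isGraded_extLe hz hb hA hk hAk hAanti hgr
  refine ⟨fun a b hab => ?_, (Set.iUnion_subset hsub).antisymm fun b hbk => ?_⟩
  · have hbz : b ≠ z := by
      rintro rfl
      exact hab.1.2 (hb.eq_bot_of_le hab.1.1)
    by_cases ha : a = z
    · subst ha
      obtain ⟨i, hbA⟩ := exists_mem_of_covByRel_bot hz hb hA hk hAk hgr hab
      rw [hzk, hsub i hbA]
    · have := hgr _ _ ((covByRel_extLe_castAdd_iff hz ha b).mpr hab)
      rwa [dep_extLe_castAdd hz hb hA ha, dep_extLe_castAdd hz hb hA hbz] at this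
  · have hbz : b ≠ z := by
      rintro rfl
      have : dep r o b = k := hbk
      omega
    exact Set.mem_iUnion.mpr (exists_mem_of_covByRel_bot hz hb hA hk hAk hgr
      (covByRel_bot_of_dep_eq hb hk hbz hbk))

theorem isGraded_extLe_of_isGraded [NeZero m] (hL : IsGraded r o) (hU : ⋃ i, A i = lev r o k) :
    IsGraded (extLe r A) (castAdd m o) := by
  obtain ⟨w, hwA, hwk⟩ := hAk 0
  have hzk := dep_bot_eq hb hk (fun h => hA 0 (h ▸ hwA)) hwk
  have hAk' : ∀ i, ∀ b ∈ A i, dep r o b = k := fun i b hbA =>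
    hU.subset (Set.mem_iUnion_of_mem i hbA)
  intro x y hxy
  induction x using Fin.addCases with
  | left a =>
    induction y using Fin.addCases with
    | left b =>
      by_cases ha : a = z
      · subst ha
        obtain ⟨hzb, hnup⟩ := (covByRel_extLe_bot_castAdd_iff hz b).mp hxy
        have hbk : dep r o b = k := (Nat.add_right_cancel (hzk.symm.trans (hL _ _ hzb))).symm
        have hbA : b ∈ ⋃ i, A i := hU.symm.subset hbk
        obtain ⟨i, hbA⟩ := Set.mem_iUnion.mp hbA
        exact (hnup i ⟨b, hbA, refl_of r b⟩).elim
      · have hbz : b ≠ z := by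
          rintro rfl
          exact ha (hb.eq_bot_of_le ((extLe_castAdd_castAdd a b).mp hxy.1.1))
        rw [dep_extLe_castAdd hz hb hA ha, dep_extLe_castAdd hz hb hA hbz]
        exact hL a b ((covByRel_extLe_castAdd_iff hz ha b).mp hxy)
    | right j =>
      obtain rfl := (extLe_castAdd_natAdd hz a j).mp hxy.1.1
      rw [dep_extLe_bot hz hb hA hk hAk j, dep_extLe_natAdd hz hb hA hk hAk]
  | right i =>
    induction y using Fin.addCases with
    | left b =>
      have hbA := (covByRel_extLe_natAdd_castAdd_iff hAanti i b).mp hxy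
      rw [dep_extLe_natAdd hz hb hA hk hAk, dep_extLe_castAdd hz hb hA (fun h => hA i (h ▸ hbA)),
        hAk' i b hbA]
    | right j =>
      exact (hxy.1.2 (congrArg _ ((extLe_natAdd_natAdd i j).mp hxy.1.1))).elim

theorem isGraded_extLe_iff [NeZero m] :
    IsGraded (extLe r A) (castAdd m o) ↔ IsGraded r o ∧ ⋃ i, A i = lev r o k :=
  ⟨isGraded_of_isGraded_extLe hz hb hA hk hAk hAanti,
    fun ⟨hL, hU⟩ => isGraded_extLe_of_isGraded hz hb hA hk hAk hAanti hL hU⟩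

end Extension

instance _root_.Lattice.isPartialOrder_le {α : Type*} (L : Lattice α) :
    IsPartialOrder α L.le where
  refl := L.le_refl
  trans := L.le_trans
  antisymm := L.le_antisymm

/-- the extension by new atoms is graded iff `L` is graded and the union of
the covering sets of the new atoms is the `k`-th level of `L`. -/
theorem statement12 {n m : ℕ} (hn : 2 ≤ n) (hm : 1 ≤ m) (L : Lattice (Fin n))
    (hb : Bounds L.le ⟨0, by omega⟩ ⟨1, by omega⟩)
    (hlev : Levellised L.le ⟨1, by omega⟩)
    (k : ℕ) (hk : dep L.le ⟨1, by omega⟩ ⟨n - 1, by omega⟩ = k)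
    (A : Fin m → Set (Fin n))
    (hB1 : ∀ i : Fin m, (A i ∩ lev L.le ⟨1, by omega⟩ k).Nonempty)
    (hB2 : ∀ i : Fin m, IsLatticeAntichain L ⟨0, by omega⟩ (A i)) :
    (∀ a b : Fin (n + m), CovByRel (extLe L.le A) a b →
        dep (extLe L.le A) ⟨1, by omega⟩ a = dep (extLe L.le A) ⟨1, by omega⟩ b + 1) ↔
      ((∀ a b : Fin n, CovByRel L.le a b →
          dep L.le ⟨1, by omega⟩ a = dep L.le ⟨1, by omega⟩ b + 1) ∧
        (⋃ i : Fin m, A i) = lev L.le ⟨1, by omega⟩ k) := by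
  have : NeZero m := ⟨by omega⟩
  have hdep : ∀ a, a ≠ ⟨0, by omega⟩ → dep L.le ⟨1, by omega⟩ a ≤ k := fun a ha =>
    hk ▸ hlev.dep_le a fun h => ha (Fin.ext h)
  exact isGraded_extLe_iff rfl hb (fun i h => (hB2 i).2.1 _ h rfl) hdep hB1
    (fun i => (hB2 i).2.2.1)

end PaperLattice
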